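/- Let Ã, A, P be invertible 2×2 complex matrices, c ∈ ℂ with |c| = 1, and let E be a 2×2 complex matrix such that c·P*AP = Ã + E and ‖E‖ ≤ |det Ã|/(8‖Ã‖+4). Then | |det P| − (|det Ã|/|det A|)^{1/2} | ≤ ‖E‖·(4‖Ã‖+2)/√(|det Ã|·|det A|). -/

import Mathlib

open Matrix

/-- The entrywise maximum norm `‖X‖ = max_{j,k} |x_{jk}|` on complex matrices. -/
noncomputable def maxNorm {n : ℕ} (X : Matrix (Fin n) (Fin n) ℂ) : ℝ :=
  ((Finset.univ.sup fun p : Fin n × Fin n => ‖X p.1 p.2‖₊ : NNReal) : ℝ)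

/-!
Taking determinants in `c • Pᴴ A P = Ã + E` gives `|det A| |det P|² = |det(Ã + E)|`, and for
`2 × 2` matrices `|det(Ã + E) - det Ã| ≤ 2‖E‖(2‖Ã‖ + ‖E‖) =: δ`. So `|det A| |det P|²` is within `δ`
of `|det Ã|`, and the smallness assumption on `‖E‖` (together with `|det Ã| ≤ 2‖Ã‖²`) makes
`δ ≤ 3/4 |det Ã|`. In that regime the square root is Lipschitz with constant `2 / (3√|det Ã|)`,
because `√s + √r ≥ 3/2 √r` once `s ≥ r/4`.
-/

section MaxNorm

variable {n : ℕ}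

lemma maxNorm_nonneg (X : Matrix (Fin n) (Fin n) ℂ) : 0 ≤ maxNorm X :=
  NNReal.coe_nonneg _

lemma norm_entry_le_maxNorm (X : Matrix (Fin n) (Fin n) ℂ) (i j : Fin n) :
    ‖X i j‖ ≤ maxNorm X :=
  NNReal.coe_le_coe.mpr <|
    Finset.le_sup (f := fun p : Fin n × Fin n => ‖X p.1 p.2‖₊) (Finset.mem_univ (i, j))

end MaxNorm

lemma norm_det_smul_conjTranspose_mul_mul {ι : Type*} [Fintype ι] [DecidableEq ι]
    (c : ℂ) (A P : Matrix ι ι ℂ) :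
    ‖(c • (Pᴴ * A * P)).det‖ = ‖c‖ ^ Fintype.card ι * ‖A.det‖ * ‖P.det‖ ^ 2 := by
  rw [det_smul, det_mul, det_mul, det_conjTranspose]
  simp only [norm_mul, norm_pow, norm_star]
  ring

section FinTwo

variable (X E : Matrix (Fin 2) (Fin 2) ℂ)

lemma norm_det_fin_two_le : ‖X.det‖ ≤ 2 * maxNorm X ^ 2 := by
  have hX := norm_entry_le_maxNorm X
  have hX0 := maxNorm_nonneg X
  calc ‖X.det‖ = ‖X 0 0 * X 1 1 - X 0 1 * X 1 0‖ := by rw [det_fin_two]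
    _ ≤ ‖X 0 0‖ * ‖X 1 1‖ + ‖X 0 1‖ * ‖X 1 0‖ := by
        rw [← norm_mul, ← norm_mul]; exact norm_sub_le _ _
    _ ≤ maxNorm X * maxNorm X + maxNorm X * maxNorm X := by gcongr <;> apply hX
    _ = 2 * maxNorm X ^ 2 := by ring

lemma norm_det_add_sub_det_fin_two_le :
    ‖(X + E).det - X.det‖ ≤ 2 * maxNorm E * (2 * maxNorm X + maxNorm E) := by
  have hX := norm_entry_le_maxNorm X
  have hE := norm_entry_le_maxNorm E
  have hX0 := maxNorm_nonneg X
  have hE0 := maxNorm_nonneg E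
  have hexpand : (X + E).det - X.det =
      X 0 0 * E 1 1 + E 0 0 * X 1 1 + E 0 0 * E 1 1
        - (X 0 1 * E 1 0 + E 0 1 * X 1 0 + E 0 1 * E 1 0) := by
    simp only [det_fin_two, Matrix.add_apply]; ring
  rw [hexpand]
  refine (norm_sub_le _ _).trans ?_
  refine (add_le_add (norm_add₃_le ..) (norm_add₃_le ..)).trans ?_
  simp only [norm_mul]
  calc _ ≤ (maxNorm X * maxNorm E + maxNorm E * maxNorm X + maxNorm E * maxNorm E)
        + (maxNorm X * maxNorm E + maxNorm E * maxNorm X + maxNorm E * maxNorm E) := by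
        gcongr <;> first | apply hX | apply hE
    _ = 2 * maxNorm E * (2 * maxNorm X + maxNorm E) := by ring

end FinTwo

lemma abs_sqrt_sub_sqrt_le {r s : ℝ} (hr : 0 < r) (hs : 0 ≤ s) (hsr : |s - r| ≤ 3 / 4 * r) :
    |√s - √r| ≤ 2 / 3 * |s - r| / √r := by
  have hsqrt_r : 0 < √r := Real.sqrt_pos.mpr hr
  have hquarter : r / 4 ≤ s := by linarith [(abs_le.mp hsr).1]
  have hhalf : √r / 2 ≤ √s := by
    calc √r / 2 = √(r / 4) := by
          rw [Real.sqrt_div' _ (by norm_num : (0 : ℝ) ≤ 4),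
            show (4 : ℝ) = 2 ^ 2 by norm_num, Real.sqrt_sq (by norm_num)]
      _ ≤ √s := Real.sqrt_le_sqrt hquarter
  have hfactor : |√s - √r| * (√s + √r) = |s - r| := by
    rw [← abs_of_nonneg (by positivity : 0 ≤ √s + √r), ← abs_mul, mul_comm,
      ← sq_sub_sq, Real.sq_sqrt hs, Real.sq_sqrt hr.le]
  rw [le_div_iff₀ hsqrt_r]
  nlinarith [abs_nonneg (√s - √r)]

lemma abs_sub_sqrt_div_le {x d D δ : ℝ} (hx : 0 ≤ x) (hd : 0 < d) (hD : 0 < D)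
    (hclose : |d * x ^ 2 - D| ≤ δ) (hδ : δ ≤ 3 / 4 * D) :
    |x - √(D / d)| ≤ 2 / 3 * δ / √(D * d) := by
  have hsqrt_d : 0 < √d := Real.sqrt_pos.mpr hd
  have hsqrt : |√(d * x ^ 2) - √D| ≤ 2 / 3 * |d * x ^ 2 - D| / √D :=
    abs_sqrt_sub_sqrt_le hD (by positivity) (hclose.trans hδ)
  rw [Real.sqrt_mul hd.le, Real.sqrt_sq hx] at hsqrt
  have hrescale : |x - √(D / d)| = |√d * x - √D| / √d := by
    rw [Real.sqrt_div hD.le, ← abs_of_pos hsqrt_d, ← abs_div, abs_of_pos hsqrt_d]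
    field_simp
  rw [hrescale, Real.sqrt_mul hD.le, ← div_div]
  gcongr
  exact hsqrt.trans (by gcongr)

theorem det_modulus_estimate_of_perturbed_conjugation_general
    (A A' P E : Matrix (Fin 2) (Fin 2) ℂ) (c : ℂ)
    (hA : IsUnit A) (hA' : IsUnit A') (hc : ‖c‖ = 1)
    (heq : c • (Pᴴ * A * P) = A' + E)
    (hE : maxNorm E ≤ ‖A'.det‖ / (8 * maxNorm A' + 4)) :
    |‖P.det‖ - Real.sqrt (‖A'.det‖ / ‖A.det‖)| ≤
      maxNorm E * (4 * maxNorm A' + 2) / Real.sqrt (‖A'.det‖ * ‖A.det‖) := by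
  have hdetA : 0 < ‖A.det‖ := norm_pos_iff.mpr ((isUnit_iff_isUnit_det A).mp hA).ne_zero
  have hdetA' : 0 < ‖A'.det‖ := norm_pos_iff.mpr ((isUnit_iff_isUnit_det A').mp hA').ne_zero
  have ht := maxNorm_nonneg A'
  have he := maxNorm_nonneg E
  have hsmall : maxNorm E * (8 * maxNorm A' + 4) ≤ ‖A'.det‖ := by
    rwa [le_div_iff₀ (by positivity)] at hE
  have hdet_bound := norm_det_fin_two_le A'
  have hclose : |‖A.det‖ * ‖P.det‖ ^ 2 - ‖A'.det‖|
      ≤ 2 * maxNorm E * (2 * maxNorm A' + maxNorm E) := by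
    have hconj := norm_det_smul_conjTranspose_mul_mul c A P
    rw [heq, hc, one_pow, one_mul] at hconj
    rw [← hconj]
    exact (abs_norm_sub_norm_le _ _).trans (norm_det_add_sub_det_fin_two_le A' E)
  refine (abs_sub_sqrt_div_le (norm_nonneg _) hdetA hdetA' hclose (by nlinarith)).trans ?_
  have he_quarter : maxNorm E ≤ maxNorm A' / 4 := by nlinarith
  gcongr ?_ / _
  nlinarith

/-- Let `Ã, A, P` be invertible `2×2` complex matrices, `|c| = 1`,
`c·P*AP = Ã + E` and `‖E‖ ≤ |det Ã|/(8‖Ã‖+4)`. Then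
`| |det P| − (|det Ã|/|det A|)^{1/2} | ≤ ‖E‖·(4‖Ã‖+2)/√(|det Ã|·|det A|)`. -/
theorem det_modulus_estimate_of_perturbed_conjugation
    (A A' P E : Matrix (Fin 2) (Fin 2) ℂ) (c : ℂ)
    (hA : IsUnit A) (hA' : IsUnit A') (hP : IsUnit P) (hc : ‖c‖ = 1)
    (heq : c • (Pᴴ * A * P) = A' + E)
    (hE : maxNorm E ≤ ‖A'.det‖ / (8 * maxNorm A' + 4)) :
    |‖P.det‖ - Real.sqrt (‖A'.det‖ / ‖A.det‖)| ≤
      maxNorm E * (4 * maxNorm A' + 2) / Real.sqrt (‖A'.det‖ * ‖A.det‖) :=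
  det_modulus_estimate_of_perturbed_conjugation_general A A' P E c hA hA' hc heq hE
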